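/- In any minimum u-v cut S of a graph, every vertex w ∉ {u, v} has at most half of its weighted degree contributed to S: the total weight of edges of S incident to w is at most deg_w(w)/2. -/
import Mathlib


open Finset

/-- Weight of the multiterminal cut induced by block assignment `f`
(each unordered edge counted once via `u < v`). -/
def cutWeight {n k : ℕ} (w : Fin n → Fin n → ℕ) (f : Fin n → Fin k) : ℕ :=
  ∑ u : Fin n, ∑ v : Fin n, if u < v ∧ f u ≠ f v then w u v else 0

/-- `f` is a valid multiterminal-cut partition: terminal `t i` is in block `i`. -/
def isMTCut {n k : ℕ} (t : Fin k → Fin n) (f : Fin n → Fin k) : Prop :=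
  ∀ i, f (t i) = i

/-- Minimum multiterminal cut weight `W(G)`. -/
noncomputable def mtc {n k : ℕ} (w : Fin n → Fin n → ℕ) (t : Fin k → Fin n) : ℕ :=
  sInf {c | ∃ f : Fin n → Fin k, isMTCut t f ∧ cutWeight w f = c}

/-- Weight of the bipartition cut induced by `g`. -/
def biCut {n : ℕ} (w : Fin n → Fin n → ℕ) (g : Fin n → Bool) : ℕ :=
  ∑ u : Fin n, ∑ v : Fin n, if u < v ∧ g u ≠ g v then w u v else 0

/-- Minimum isolating cut value `λ(G, t i, T \ {t i})`. -/
noncomputable def isoCut {n k : ℕ} (w : Fin n → Fin n → ℕ) (t : Fin k → Fin n) (i : Fin k) : ℕ :=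
  sInf {c | ∃ g : Fin n → Bool, g (t i) = true ∧ (∀ j, j ≠ i → g (t j) = false) ∧ biCut w g = c}

/-- Minimum `u`-`v` cut value `λ(u,v)`. -/
noncomputable def minUV {n : ℕ} (w : Fin n → Fin n → ℕ) (u v : Fin n) : ℕ :=
  sInf {c | ∃ g : Fin n → Bool, g u = true ∧ g v = false ∧ biCut w g = c}

/-- Boundary weight `δ` of block `i` of partition `f`. -/
def blockBd {n k : ℕ} (w : Fin n → Fin n → ℕ) (f : Fin n → Fin k) (i : Fin k) : ℕ :=
  ∑ u : Fin n, ∑ v : Fin n, if f u = i ∧ f v ≠ i then w u v else 0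

/-- The weight function of `G - e` for `e = (u,v)`. -/
def delEdge {n : ℕ} (w : Fin n → Fin n → ℕ) (u v : Fin n) : Fin n → Fin n → ℕ :=
  fun a b => if (a = u ∧ b = v) ∨ (a = v ∧ b = u) then 0 else w a b

lemma cut_split {n : ℕ} (w : Fin n → Fin n → ℕ) (hsym : ∀ a b, w a b = w b a)
    (hloop : ∀ a, w a a = 0) (x : Fin n) (S : Finset (Fin n)) :
    (∑ a : Fin n, ∑ b : Fin n, if a ∈ S ∧ b ∉ S then w a b else 0)
      = (∑ a : Fin n, ∑ b : Fin n, if a ≠ x ∧ b ≠ x ∧ a ∈ S ∧ b ∉ S then w a b else 0)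
        + ∑ y : Fin n, if (x ∈ S) ≠ (y ∈ S) then w x y else 0 := by
  have step : ∀ a b : Fin n, (if a ∈ S ∧ b ∉ S then w a b else 0)
      = (if a ≠ x ∧ b ≠ x ∧ a ∈ S ∧ b ∉ S then w a b else 0)
        + (if a = x ∧ x ∈ S ∧ b ∉ S then w a b else 0)
        + (if a ≠ x ∧ b = x ∧ a ∈ S ∧ x ∉ S then w a b else 0) := by
    intro a b
    by_cases hax : a = x <;> by_cases hbx : b = x <;> subst_vars <;>
      simp_all <;> split_ifs <;> simp_all
  calc (∑ a : Fin n, ∑ b : Fin n, if a ∈ S ∧ b ∉ S then w a b else 0)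
      = (∑ a : Fin n, ∑ b : Fin n, if a ≠ x ∧ b ≠ x ∧ a ∈ S ∧ b ∉ S then w a b else 0)
        + ((∑ a : Fin n, ∑ b : Fin n, if a = x ∧ x ∈ S ∧ b ∉ S then w a b else 0)
        + (∑ a : Fin n, ∑ b : Fin n, if a ≠ x ∧ b = x ∧ a ∈ S ∧ x ∉ S then w a b else 0)) := by
        simp only [step, Finset.sum_add_distrib]; ring
    _ = _ := by
        congr 1
        have h1 : (∑ a : Fin n, ∑ b : Fin n, if a = x ∧ x ∈ S ∧ b ∉ S then w a b else 0)
            = ∑ b : Fin n, if x ∈ S ∧ b ∉ S then w x b else 0 := by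
          rw [Finset.sum_eq_single x]
          · simp
          · intro a _ ha
            apply Finset.sum_eq_zero; intro b _
            simp [ha]
          · simp
        have h2 : (∑ a : Fin n, ∑ b : Fin n, if a ≠ x ∧ b = x ∧ a ∈ S ∧ x ∉ S then w a b else 0)
            = ∑ a : Fin n, if a ≠ x ∧ a ∈ S ∧ x ∉ S then w a x else 0 := by
          apply Finset.sum_congr rfl; intro a _
          rw [Finset.sum_eq_single x]
          · by_cases h : a ≠ x ∧ a ∈ S ∧ x ∉ S <;> simp [h] <;> tauto
          · intro b _ hb; simp [hb]
          · simp
        rw [h1, h2]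
        by_cases hxS : x ∈ S
        · have : (∑ a : Fin n, if a ≠ x ∧ a ∈ S ∧ x ∉ S then w a x else 0) = 0 := by
            apply Finset.sum_eq_zero; intro a _; simp [hxS]
          rw [this, add_zero]
          apply Finset.sum_congr rfl; intro b _
          have : ((x ∈ S) ≠ (b ∈ S)) ↔ (x ∈ S ∧ b ∉ S) := by
            simp [hxS, eq_iff_iff]
          by_cases hb : b ∈ S <;> simp [hxS, hb]
        · have : (∑ b : Fin n, if x ∈ S ∧ b ∉ S then w x b else 0) = 0 := by
            apply Finset.sum_eq_zero; intro b _; simp [hxS]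
          rw [this, zero_add]
          apply Finset.sum_congr rfl; intro a _
          by_cases ha : a ∈ S
          · have hax : a ≠ x := by rintro rfl; exact hxS ha
            simp [hxS, ha, hax, eq_iff_iff, hsym a x]
          · by_cases hax : a = x
            · subst hax; simp [hxS, hloop]
            · simp [hxS, ha, hax, eq_iff_iff]

/-- in a minimum u-v cut given by a side A (u ∈ A, v ∉ A), every
vertex x ∉ {u,v} has at most half its weighted degree on cut edges. -/
theorem stmt16 {n : ℕ} (w : Fin n → Fin n → ℕ)
    (hsym : ∀ a b, w a b = w b a) (hloop : ∀ a, w a a = 0)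
    (u v : Fin n) (huv : u ≠ v)
    (A : Finset (Fin n)) (huA : u ∈ A) (hvA : v ∉ A)
    (hmin : ∀ B : Finset (Fin n), u ∈ B → v ∉ B →
      (∑ a : Fin n, ∑ b : Fin n, if a ∈ A ∧ b ∉ A then w a b else 0)
        ≤ ∑ a : Fin n, ∑ b : Fin n, if a ∈ B ∧ b ∉ B then w a b else 0)
    (x : Fin n) (hxu : x ≠ u) (hxv : x ≠ v) :
    2 * (∑ y : Fin n, if (x ∈ A) ≠ (y ∈ A) then w x y else 0) ≤ ∑ y : Fin n, w x y := by
  set B : Finset (Fin n) := if x ∈ A then A.erase x else insert x A with hB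
  have hmemB : ∀ y : Fin n, y ≠ x → (y ∈ B ↔ y ∈ A) := by
    intro y hy; rw [hB]; split <;> simp [hy]
  have hxB : x ∈ B ↔ x ∉ A := by
    rw [hB]; split <;> simp_all
  have huB : u ∈ B := (hmemB u (Ne.symm hxu)).mpr huA
  have hvB : v ∉ B := fun h => hvA ((hmemB v (Ne.symm hxv)).mp h)
  have hR : (∑ a : Fin n, ∑ b : Fin n, if a ≠ x ∧ b ≠ x ∧ a ∈ A ∧ b ∉ A then w a b else 0)
      = (∑ a : Fin n, ∑ b : Fin n, if a ≠ x ∧ b ≠ x ∧ a ∈ B ∧ b ∉ B then w a b else 0) := by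
    apply Finset.sum_congr rfl; intro a _
    apply Finset.sum_congr rfl; intro b _
    by_cases hax : a = x
    · simp [hax]
    · by_cases hbx : b = x
      · simp [hbx]
      · simp only [hmemB a hax, hmemB b hbx]
  have hcross : (∑ y : Fin n, if (x ∈ A) ≠ (y ∈ A) then w x y else 0)
      + (∑ y : Fin n, if (x ∈ B) ≠ (y ∈ B) then w x y else 0) = ∑ y : Fin n, w x y := by
    rw [← Finset.sum_add_distrib]
    apply Finset.sum_congr rfl; intro y _
    by_cases hyx : y = x
    · subst hyx; simp [hloop]
    · have h1 := hmemB y hyx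
      by_cases hxA : x ∈ A <;> by_cases hyA : y ∈ A <;>
        simp_all [eq_iff_iff]
  have hle : (∑ y : Fin n, if (x ∈ A) ≠ (y ∈ A) then w x y else 0)
      ≤ (∑ y : Fin n, if (x ∈ B) ≠ (y ∈ B) then w x y else 0) := by
    have h := hmin B huB hvB
    rw [cut_split w hsym hloop x A, cut_split w hsym hloop x B, hR] at h
    omega
  omega
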